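/- Let (X, ≤₁, ≤₂, R) be a modal FM frame and □ the operation on RO₁₂(X) given by □(Y) = {w | R[w] ⊆ Y} (assumed to map RO₁₂(X) into itself). Then □ preserves arbitrary meets of RO₁₂(X) (which are intersections), and hence has a left adjoint ◆ on RO₁₂(X) given by ◆(Y) = I₁C₂(↑₁ R[Y]). -/

import Mathlib

/-- `I₁C₂` for the Alexandroff upset topologies of an FM frame. -/
def fmIC {X : Type*} (le1 le2 : X → X → Prop) (A : Set X) : Set X :=
  {x | ∀ y, le1 x y → ∃ z, le2 y z ∧ z ∈ A}

/-- The `≤₁`-upward closure. -/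
def fmUp1 {X : Type*} (le1 : X → X → Prop) (Y : Set X) : Set X :=
  {x | ∃ y ∈ Y, le1 y x}

/-- The box operation on sets. -/
def fmBox {X : Type*} (R : X → X → Prop) (Y : Set X) : Set X :=
  {w | ∀ v, R w v → v ∈ Y}

/-- `R[Y]`. -/
def fmRImg {X : Type*} (R : X → X → Prop) (Y : Set X) : Set X :=
  {v | ∃ w ∈ Y, R w v}

/-! A fixed point `Z = I₁C₂(Z)` is a `≤₁`-upset, and `I₁C₂` is monotone and inflationary on
`≤₁`-upsets. Hence for such `Z`, `I₁C₂(↑₁ R[Y]) ⊆ Z ↔ ↑₁ R[Y] ⊆ Z ↔ R[Y] ⊆ Z`, and the last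
condition is `Y ⊆ □Z` by the image/preimage adjunction of `R`. -/

section

variable {X : Type*} {le1 le2 R : X → X → Prop}

theorem fmBox_iInter {ι : Sort*} (Y : ι → Set X) :
    fmBox R (⋂ i, Y i) = ⋂ i, fmBox R (Y i) := by
  ext w
  simp only [fmBox, Set.mem_iInter]
  exact ⟨fun h i v hv => h v hv i, fun h v hv i => h i v hv⟩

theorem fmRImg_subset_iff {Y Z : Set X} : fmRImg R Y ⊆ Z ↔ Y ⊆ fmBox R Z :=
  ⟨fun h w hw _ hv => h ⟨w, hw, hv⟩, fun h _ ⟨_, hw, hv⟩ => h hw _ hv⟩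

theorem fmUp1_mono {Y Z : Set X} (h : Y ⊆ Z) : fmUp1 le1 Y ⊆ fmUp1 le1 Z :=
  fun _ ⟨y, hy, hyx⟩ => ⟨y, h hy, hyx⟩

theorem subset_fmUp1 [Std.Refl le1] (Y : Set X) : Y ⊆ fmUp1 le1 Y :=
  fun y hy => ⟨y, hy, refl y⟩

theorem fmUp1_fmUp1_subset [IsTrans X le1] (Y : Set X) :
    fmUp1 le1 (fmUp1 le1 Y) ⊆ fmUp1 le1 Y :=
  fun _ ⟨_, ⟨y, hy, hyv⟩, hvx⟩ => ⟨y, hy, _root_.trans hyv hvx⟩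

theorem fmUp1_subset_iff [Std.Refl le1] {Y Z : Set X} (hZ : fmUp1 le1 Z ⊆ Z) :
    fmUp1 le1 Y ⊆ Z ↔ Y ⊆ Z :=
  ⟨(subset_fmUp1 Y).trans, fun h => (fmUp1_mono h).trans hZ⟩

theorem fmIC_mono {A B : Set X} (h : A ⊆ B) : fmIC le1 le2 A ⊆ fmIC le1 le2 B :=
  fun _ hx y hxy => (hx y hxy).imp fun _ => And.imp_right (@h _)

theorem fmUp1_fmIC_subset [IsTrans X le1] (A : Set X) :
    fmUp1 le1 (fmIC le1 le2 A) ⊆ fmIC le1 le2 A :=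
  fun _ ⟨_, hv, hvx⟩ y hxy => hv y (_root_.trans hvx hxy)

theorem subset_fmIC [Std.Refl le2] {A : Set X} (hA : fmUp1 le1 A ⊆ A) :
    A ⊆ fmIC le1 le2 A :=
  fun x hx y hxy => ⟨y, refl y, hA ⟨x, hx, hxy⟩⟩

theorem fmIC_subset_iff [Std.Refl le2] {A Z : Set X} (hA : fmUp1 le1 A ⊆ A)
    (hZ : Z = fmIC le1 le2 Z) : fmIC le1 le2 A ⊆ Z ↔ A ⊆ Z :=
  ⟨(subset_fmIC hA).trans, fun h => hZ ▸ fmIC_mono h⟩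

end

theorem fm_box_meets_and_left_adjoint_general {X : Type*} (le1 le2 R : X → X → Prop)
    [IsPartialOrder X le1] [IsPartialOrder X le2] :
    (∀ {ι : Sort*} (Y : ι → Set X), (∀ i, Y i = fmIC le1 le2 (Y i)) →
      fmBox R (⋂ i, Y i) = ⋂ i, fmBox R (Y i)) ∧
    (∀ Y Z : Set X, Y = fmIC le1 le2 Y → Z = fmIC le1 le2 Z →
      (fmIC le1 le2 (fmUp1 le1 (fmRImg R Y)) ⊆ Z ↔ Y ⊆ fmBox R Z)) := by
  refine ⟨fun Y _ => fmBox_iInter Y, fun Y Z _ hZ => ?_⟩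
  have hZ_upset : fmUp1 le1 Z ⊆ Z := by
    rw [hZ]
    exact fmUp1_fmIC_subset Z
  rw [fmIC_subset_iff (fmUp1_fmUp1_subset _) hZ, fmUp1_subset_iff hZ_upset, fmRImg_subset_iff]

/-- In a modal FM frame, `□` preserves arbitrary intersections of refined regular open
sets, and `◆(Y) = I₁C₂(↑₁ R[Y])` is its left adjoint on `RO₁₂(X)`. -/
theorem fm_box_meets_and_left_adjoint {X : Type*} (le1 le2 R : X → X → Prop)
    [IsPartialOrder X le1] [IsPartialOrder X le2]
    (hsub : ∀ x y, le2 x y → le1 x y)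
    (hbox : ∀ Y : Set X, Y = fmIC le1 le2 Y → fmBox R Y = fmIC le1 le2 (fmBox R Y)) :
    (∀ {ι : Sort*} (Y : ι → Set X), (∀ i, Y i = fmIC le1 le2 (Y i)) →
      fmBox R (⋂ i, Y i) = ⋂ i, fmBox R (Y i)) ∧
    (∀ Y Z : Set X, Y = fmIC le1 le2 Y → Z = fmIC le1 le2 Z →
      (fmIC le1 le2 (fmUp1 le1 (fmRImg R Y)) ⊆ Z ↔ Y ⊆ fmBox R Z)) :=
  fm_box_meets_and_left_adjoint_general le1 le2 R
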